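/- Let x₁,…,x_N ∈ ℝ^d satisfy ‖x_j‖₂ ≤ C_x for all j, and for θ ∈ ℝ^d let p(·|·;θ) be the MNL choice model. Then for every assortment s ⊆ [N] and all θ₁, θ₂ ∈ ℝ^d, the squared Hellinger distance satisfies (1/2) Σ_{a∈s∪{0}} ( √(p(a|s;θ₁)) − √(p(a|s;θ₂)) )² ≤ (9 C_x² / 8) · ‖θ₁ − θ₂‖₂². -/
import Mathlib


open Finset
open scoped RealInnerProductSpace

/-- MNL choice probability of option `a` (with `0` the no-purchase option)
given assortment `s`, item features `x` and parameter `θ`. -/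
noncomputable def mnlProb {d : ℕ} (x : ℕ → EuclideanSpace ℝ (Fin d))
    (θ : EuclideanSpace ℝ (Fin d)) (s : Finset ℕ) (a : ℕ) : ℝ :=
  if a = 0 then 1 / (1 + ∑ j ∈ s, Real.exp ⟪x j, θ⟫)
  else Real.exp ⟪x a, θ⟫ / (1 + ∑ j ∈ s, Real.exp ⟪x j, θ⟫)

private lemma sqrt_sub_sq_le {u v : ℝ} (hu : 0 < u) (hv : 0 < v) :
    (Real.sqrt u - Real.sqrt v) ^ 2 ≤ (1/4) * (u + v) * (Real.log u - Real.log v) ^ 2 := by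
  wlog h : v ≤ u generalizing u v
  · have h' := this hv hu (le_of_not_ge h)
    calc (Real.sqrt u - Real.sqrt v) ^ 2 = (Real.sqrt v - Real.sqrt u) ^ 2 := by ring
      _ ≤ (1/4) * (v + u) * (Real.log v - Real.log u) ^ 2 := h'
      _ = (1/4) * (u + v) * (Real.log u - Real.log v) ^ 2 := by ring
  set δ := Real.log u - Real.log v with hδdef
  have hδ : 0 ≤ δ := sub_nonneg.2 (Real.log_le_log hv h)
  have hu' : u = v * Real.exp δ := by
    rw [hδdef, Real.exp_sub, Real.exp_log hu, Real.exp_log hv]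
    field_simp
  have hexpsq : Real.exp δ = (Real.exp (δ/2)) ^ 2 := by
    rw [sq, ← Real.exp_add]; ring_nf
  have hsqrt : Real.sqrt u = Real.sqrt v * Real.exp (δ/2) := by
    rw [hu', Real.sqrt_mul hv.le, hexpsq, Real.sqrt_sq (Real.exp_pos _).le]
  set E := Real.exp (δ/2) with hE
  have hEpos : 0 < E := Real.exp_pos _
  have key : E - 1 ≤ (δ/2) * E := by
    have h1 : (-(δ/2)) + 1 ≤ Real.exp (-(δ/2)) := Real.add_one_le_exp _
    have h2 : E * Real.exp (-(δ/2)) = 1 := by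
      rw [hE, ← Real.exp_add]; simp
    nlinarith [hEpos]
  have hE1 : 1 ≤ E := Real.one_le_exp (by linarith)
  have hvsq : Real.sqrt v ^ 2 = v := Real.sq_sqrt hv.le
  have hsv : 0 ≤ Real.sqrt v := Real.sqrt_nonneg v
  rw [hsqrt, hu', hexpsq]
  have hsq : (E - 1) ^ 2 ≤ ((δ/2) * E) ^ 2 := by
    have : 0 ≤ E - 1 := by linarith
    nlinarith [key]
  calc (Real.sqrt v * E - Real.sqrt v) ^ 2 = v * (E - 1) ^ 2 := by
        have h' : (Real.sqrt v * E - Real.sqrt v) ^ 2 = Real.sqrt v ^ 2 * (E - 1) ^ 2 := by ring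
        rw [h', hvsq]
    _ ≤ v * ((δ/2) * E) ^ 2 := by
        exact mul_le_mul_of_nonneg_left hsq hv.le
    _ ≤ (1/4) * (v * E ^ 2 + v) * δ ^ 2 := by nlinarith [hv.le, sq_nonneg δ]

theorem stmt16 (N d : ℕ) (x : ℕ → EuclideanSpace ℝ (Fin d)) (Cx : ℝ)
    (hx : ∀ j ∈ Finset.Icc 1 N, ‖x j‖ ≤ Cx)
    (s : Finset ℕ) (hs : s.Nonempty) (hsub : s ⊆ Finset.Icc 1 N)
    (θ₁ θ₂ : EuclideanSpace ℝ (Fin d)) :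
    (1 / 2) * ∑ a ∈ insert 0 s,
        (Real.sqrt (mnlProb x θ₁ s a) - Real.sqrt (mnlProb x θ₂ s a)) ^ 2 ≤
      (9 * Cx ^ 2 / 8) * ‖θ₁ - θ₂‖ ^ 2 := by
  obtain ⟨j0, hj0⟩ := hs
  have hC : 0 ≤ Cx := le_trans (norm_nonneg _) (hx j0 (hsub hj0))
  have h0 : (0 : ℕ) ∉ s := by
    intro h
    have := hsub h
    simp [Finset.mem_Icc] at this
  set t := ‖θ₁ - θ₂‖ with htdef
  have ht : 0 ≤ t := norm_nonneg _
  have hCt : 0 ≤ Cx * t := mul_nonneg hC ht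
  have hinner : ∀ j ∈ s, |⟪x j, θ₁⟫ - ⟪x j, θ₂⟫| ≤ Cx * t := by
    intro j hj
    have h1 : ⟪x j, θ₁⟫ - ⟪x j, θ₂⟫ = ⟪x j, θ₁ - θ₂⟫ := (inner_sub_right _ _ _).symm
    rw [h1]
    exact le_trans (abs_real_inner_le_norm _ _)
      (mul_le_mul_of_nonneg_right (hx j (hsub hj)) ht)
  set Z1 := 1 + ∑ j ∈ s, Real.exp ⟪x j, θ₁⟫ with hZ1
  set Z2 := 1 + ∑ j ∈ s, Real.exp ⟪x j, θ₂⟫ with hZ2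
  have hsumpos : ∀ θ : EuclideanSpace ℝ (Fin d),
      (0:ℝ) < 1 + ∑ j ∈ s, Real.exp ⟪x j, θ⟫ := by
    intro θ
    have : (0:ℝ) ≤ ∑ j ∈ s, Real.exp ⟪x j, θ⟫ :=
      Finset.sum_nonneg fun j _ => (Real.exp_pos _).le
    linarith
  have hZ1pos : 0 < Z1 := hsumpos θ₁
  have hZ2pos : 0 < Z2 := hsumpos θ₂
  -- Lipschitz bound on log of the normalizer
  have keyZ : ∀ θ θ' : EuclideanSpace ℝ (Fin d),
      (∀ j ∈ s, ⟪x j, θ⟫ - ⟪x j, θ'⟫ ≤ Cx * t) →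
      Real.log (1 + ∑ j ∈ s, Real.exp ⟪x j, θ⟫) ≤
        Cx * t + Real.log (1 + ∑ j ∈ s, Real.exp ⟪x j, θ'⟫) := by
    intro θ θ' hθ
    have hle : (1 + ∑ j ∈ s, Real.exp ⟪x j, θ⟫) ≤
        Real.exp (Cx * t) * (1 + ∑ j ∈ s, Real.exp ⟪x j, θ'⟫) := by
      have h1 : (1:ℝ) ≤ Real.exp (Cx * t) := Real.one_le_exp hCt
      have h2 : ∑ j ∈ s, Real.exp ⟪x j, θ⟫ ≤
          ∑ j ∈ s, Real.exp (Cx * t) * Real.exp ⟪x j, θ'⟫ := by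
        apply Finset.sum_le_sum
        intro j hj
        rw [← Real.exp_add]
        exact Real.exp_le_exp.2 (by linarith [hθ j hj])
      have h3 : ∑ j ∈ s, Real.exp (Cx * t) * Real.exp ⟪x j, θ'⟫ =
          Real.exp (Cx * t) * ∑ j ∈ s, Real.exp ⟪x j, θ'⟫ := by
        rw [Finset.mul_sum]
      nlinarith [h2, h3, h1]
    calc Real.log (1 + ∑ j ∈ s, Real.exp ⟪x j, θ⟫)
        ≤ Real.log (Real.exp (Cx * t) * (1 + ∑ j ∈ s, Real.exp ⟪x j, θ'⟫)) :=
          Real.log_le_log (hsumpos θ) hle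
      _ = Cx * t + Real.log (1 + ∑ j ∈ s, Real.exp ⟪x j, θ'⟫) := by
          rw [Real.log_mul (Real.exp_ne_zero _) (hsumpos θ').ne', Real.log_exp]
  have hlogZ12 : Real.log Z1 - Real.log Z2 ≤ Cx * t := by
    have := keyZ θ₁ θ₂ (fun j hj => le_trans (le_abs_self _) (hinner j hj))
    linarith
  have hlogZ21 : Real.log Z2 - Real.log Z1 ≤ Cx * t := by
    have := keyZ θ₂ θ₁ (fun j hj => by
      have := hinner j hj
      have := abs_le.1 this
      linarith [this.1])
    linarith
  -- positivity of probabilities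
  have hpos : ∀ (θ : EuclideanSpace ℝ (Fin d)) (a : ℕ), 0 < mnlProb x θ s a := by
    intro θ a
    unfold mnlProb
    split
    · exact div_pos one_pos (hsumpos θ)
    · exact div_pos (Real.exp_pos _) (hsumpos θ)
  -- squared log-ratio bound
  have hlogp : ∀ a ∈ insert 0 s,
      (Real.log (mnlProb x θ₁ s a) - Real.log (mnlProb x θ₂ s a)) ^ 2 ≤ (2 * (Cx * t)) ^ 2 := by
    intro a ha
    rcases Finset.mem_insert.1 ha with rfl | has
    · have e1 : mnlProb x θ₁ s 0 = 1 / Z1 := by unfold mnlProb; rw [if_pos rfl]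
      have e2 : mnlProb x θ₂ s 0 = 1 / Z2 := by unfold mnlProb; rw [if_pos rfl]
      rw [e1, e2, one_div, one_div, Real.log_inv, Real.log_inv]
      apply sq_le_sq'
      · nlinarith [hlogZ12, hCt]
      · nlinarith [hlogZ21, hCt]
    · have hane : a ≠ 0 := by rintro rfl; exact h0 has
      have e1 : Real.log (mnlProb x θ₁ s a) = ⟪x a, θ₁⟫ - Real.log Z1 := by
        unfold mnlProb
        rw [if_neg hane, Real.log_div (Real.exp_ne_zero _) hZ1pos.ne', Real.log_exp]
      have e2 : Real.log (mnlProb x θ₂ s a) = ⟪x a, θ₂⟫ - Real.log Z2 := by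
        unfold mnlProb
        rw [if_neg hane, Real.log_div (Real.exp_ne_zero _) hZ2pos.ne', Real.log_exp]
      rw [e1, e2]
      have hi := abs_le.1 (hinner a has)
      apply sq_le_sq'
      · nlinarith [hi.1, hlogZ12]
      · nlinarith [hi.2, hlogZ21]
  -- sum of probabilities is 1
  have hsum1 : ∀ θ : EuclideanSpace ℝ (Fin d), ∑ a ∈ insert 0 s, mnlProb x θ s a = 1 := by
    intro θ
    rw [Finset.sum_insert h0]
    have hcongr : ∀ a ∈ s, mnlProb x θ s a =
        Real.exp ⟪x a, θ⟫ / (1 + ∑ j ∈ s, Real.exp ⟪x j, θ⟫) := by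
      intro a ha
      unfold mnlProb
      rw [if_neg (by rintro rfl; exact h0 ha)]
    rw [Finset.sum_congr rfl hcongr, ← Finset.sum_div]
    have e0 : mnlProb x θ s 0 = 1 / (1 + ∑ j ∈ s, Real.exp ⟪x j, θ⟫) := by
      unfold mnlProb; rw [if_pos rfl]
    rw [e0]
    field_simp
  -- main chain
  have step1 : ∑ a ∈ insert 0 s,
      (Real.sqrt (mnlProb x θ₁ s a) - Real.sqrt (mnlProb x θ₂ s a)) ^ 2 ≤
      ∑ a ∈ insert 0 s,
        (1/4) * (mnlProb x θ₁ s a + mnlProb x θ₂ s a) * (2 * (Cx * t)) ^ 2 := by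
    apply Finset.sum_le_sum
    intro a ha
    calc (Real.sqrt (mnlProb x θ₁ s a) - Real.sqrt (mnlProb x θ₂ s a)) ^ 2
        ≤ (1/4) * (mnlProb x θ₁ s a + mnlProb x θ₂ s a) *
            (Real.log (mnlProb x θ₁ s a) - Real.log (mnlProb x θ₂ s a)) ^ 2 :=
          sqrt_sub_sq_le (hpos θ₁ a) (hpos θ₂ a)
      _ ≤ (1/4) * (mnlProb x θ₁ s a + mnlProb x θ₂ s a) * (2 * (Cx * t)) ^ 2 := by
          apply mul_le_mul_of_nonneg_left (hlogp a ha)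
          have := (hpos θ₁ a).le
          have := (hpos θ₂ a).le
          linarith
  have step2 : ∑ a ∈ insert 0 s,
      (1/4) * (mnlProb x θ₁ s a + mnlProb x θ₂ s a) * (2 * (Cx * t)) ^ 2 =
      2 * (Cx * t) ^ 2 := by
    have : ∀ a ∈ insert 0 s,
        (1/4) * (mnlProb x θ₁ s a + mnlProb x θ₂ s a) * (2 * (Cx * t)) ^ 2 =
        (Cx * t) ^ 2 * mnlProb x θ₁ s a + (Cx * t) ^ 2 * mnlProb x θ₂ s a := by
      intro a _; ring
    rw [Finset.sum_congr rfl this, Finset.sum_add_distrib, ← Finset.mul_sum, ← Finset.mul_sum,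
      hsum1 θ₁, hsum1 θ₂]
    ring
  have hfinal : (1/2) * (2 * (Cx * t) ^ 2) ≤ (9 * Cx ^ 2 / 8) * t ^ 2 := by
    nlinarith [mul_nonneg (sq_nonneg Cx) (sq_nonneg t)]
  calc (1 / 2) * ∑ a ∈ insert 0 s,
      (Real.sqrt (mnlProb x θ₁ s a) - Real.sqrt (mnlProb x θ₂ s a)) ^ 2
      ≤ (1/2) * (2 * (Cx * t) ^ 2) := by
        rw [← step2]
        exact mul_le_mul_of_nonneg_left step1 (by norm_num)
    _ ≤ (9 * Cx ^ 2 / 8) * t ^ 2 := hfinal
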